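/- Let H be an N_B×N_A complex matrix, B an N_A×N_s complex matrix, and Γ an N_B×N_B Hermitian positive definite complex matrix. Set M := H·B·Bᴴ·Hᴴ + Γ, C* := M⁻¹·H·B, and for any N_B×N_s complex matrix C define E(C) := (I_{N_s} − Cᴴ·H·B)·(I_{N_s} − Cᴴ·H·B)ᴴ + Cᴴ·Γ·C. Then for every N_s×N_s Hermitian positive semidefinite weight matrix W and every C, Re(Tr(W·E(C*))) ≤ Re(Tr(W·E(C))); that is, the Wiener filter C* minimizes the weighted MSE Tr(W·E(C)) simultaneously for all positive semidefinite weights W. -/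

import Mathlib

/-!
Write `G = H B` and `M = G Gᴴ + Γ`. Expanding, `E(C) = 1 + Cᴴ M C - Cᴴ G - Gᴴ C`, and since
`M C* = G` with `M` Hermitian, completing the square gives `E(C) = E(C*) + (C - C*)ᴴ M (C - C*)`.
The correction term is positive semidefinite, and the trace of a product of two positive
semidefinite matrices is a nonnegative real: with `W = Sᴴ S`, `tr (W P) = tr (S P Sᴴ)`.
-/

open Matrix ComplexOrder

namespace Matrix

theorem conjTranspose_mul_mul_sub_eq_of_mul_eq {m n R : Type*} [Fintype m] [Ring R] [StarRing R]
    {M : Matrix m m R} {G C₀ : Matrix m n R} (hM : M.IsHermitian) (hC₀ : M * C₀ = G)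
    (X : Matrix m n R) :
    Xᴴ * M * X - Xᴴ * G - Gᴴ * X = (X - C₀)ᴴ * M * (X - C₀) - C₀ᴴ * G := by
  have hC₀' : C₀ᴴ * M = Gᴴ := by
    rw [← hC₀, conjTranspose_mul, hM.eq]
  rw [conjTranspose_sub, Matrix.sub_mul, Matrix.mul_sub, Matrix.sub_mul, Matrix.sub_mul,
    Matrix.mul_assoc _ M C₀, Matrix.mul_assoc _ M C₀, hC₀, hC₀']
  abel

open scoped MatrixOrder Matrix.Norms.L2Operator in
theorem PosSemidef.trace_mul_nonneg {n 𝕜 : Type*} [Fintype n] [RCLike 𝕜] {A B : Matrix n n 𝕜}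
    (hA : A.PosSemidef) (hB : B.PosSemidef) : 0 ≤ (A * B).trace := by
  classical
  obtain ⟨S, rfl⟩ := CStarAlgebra.nonneg_iff_eq_star_mul_self.mp hA.nonneg
  rw [star_eq_conjTranspose, Matrix.mul_assoc, trace_mul_comm]
  exact (hB.mul_mul_conjTranspose_same S).trace_nonneg

end Matrix

section MSE

variable {m n R : Type*} [Fintype m] [Fintype n] [DecidableEq n] [Ring R] [StarRing R]

def mseMatrix (G : Matrix m n R) (Γ : Matrix m m R) (C : Matrix m n R) : Matrix n n R :=
  (1 - Cᴴ * G) * (1 - Cᴴ * G)ᴴ + Cᴴ * Γ * C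

theorem mseMatrix_eq (G : Matrix m n R) (Γ : Matrix m m R) (C : Matrix m n R) :
    mseMatrix G Γ C = 1 + (Cᴴ * (G * Gᴴ + Γ) * C - Cᴴ * G - Gᴴ * C) := by
  simp only [mseMatrix, conjTranspose_sub, conjTranspose_one, conjTranspose_mul,
    conjTranspose_conjTranspose, Matrix.sub_mul, Matrix.mul_sub, Matrix.mul_add, Matrix.add_mul,
    Matrix.one_mul, Matrix.mul_one, Matrix.mul_assoc]
  abel

theorem mseMatrix_eq_add_of_mul_eq {G C₀ : Matrix m n R} {Γ : Matrix m m R} (hΓ : Γ.IsHermitian)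
    (hC₀ : (G * Gᴴ + Γ) * C₀ = G) (C : Matrix m n R) :
    mseMatrix G Γ C = mseMatrix G Γ C₀ + (C - C₀)ᴴ * (G * Gᴴ + Γ) * (C - C₀) := by
  have hM : (G * Gᴴ + Γ).IsHermitian := (isHermitian_mul_conjTranspose_self G).add hΓ
  rw [mseMatrix_eq, mseMatrix_eq, conjTranspose_mul_mul_sub_eq_of_mul_eq hM hC₀,
    conjTranspose_mul_mul_sub_eq_of_mul_eq hM hC₀, sub_self, conjTranspose_zero, Matrix.zero_mul,
    Matrix.zero_mul]
  abel

end MSE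

/-- The Wiener filter `C* = M⁻¹·H·B` minimizes the weighted MSE
`Re Tr(W·E(C))` simultaneously for every positive semidefinite weight `W`. -/
theorem wiener_filter_minimizes_weighted_mse (nB nA ns : ℕ)
    (H : Matrix (Fin nB) (Fin nA) ℂ) (B : Matrix (Fin nA) (Fin ns) ℂ)
    (Γ : Matrix (Fin nB) (Fin nB) ℂ) (hΓ : Γ.PosDef)
    (M : Matrix (Fin nB) (Fin nB) ℂ)
    (hM : M = H * B * Bᴴ * Hᴴ + Γ)
    (Cstar : Matrix (Fin nB) (Fin ns) ℂ)
    (hCstar : Cstar = M⁻¹ * H * B)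
    (E : Matrix (Fin nB) (Fin ns) ℂ → Matrix (Fin ns) (Fin ns) ℂ)
    (hE : ∀ C, E C = (1 - Cᴴ * H * B) * (1 - Cᴴ * H * B)ᴴ + Cᴴ * Γ * C) :
    ∀ (W : Matrix (Fin ns) (Fin ns) ℂ), W.PosSemidef →
      ∀ C : Matrix (Fin nB) (Fin ns) ℂ,
        ((W * E Cstar).trace).re ≤ ((W * E C).trace).re := by
  intro W hW C
  rw [show H * B * Bᴴ * Hᴴ = H * B * (H * B)ᴴ by simp [conjTranspose_mul, Matrix.mul_assoc]] at hM
  have hMpd : M.PosDef := hM ▸ PosDef.posSemidef_add (posSemidef_self_mul_conjTranspose _) hΓ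
  have hCstar' : (H * B * (H * B)ᴴ + Γ) * Cstar = H * B := by
    rw [← hM, hCstar, Matrix.mul_assoc, mul_nonsing_inv_cancel_left _ _ ((isUnit_iff_isUnit_det M).mp hMpd.isUnit)]
  have hEC : ∀ C, E C = mseMatrix (H * B) Γ C := fun C => by
    rw [hE, mseMatrix, Matrix.mul_assoc Cᴴ]
  rw [hEC, hEC, mseMatrix_eq_add_of_mul_eq hΓ.isHermitian hCstar' C, ← hM, Matrix.mul_add,
    trace_add, Complex.add_re]
  exact le_add_of_nonneg_right
    (Complex.nonneg_iff.mp (hW.trace_mul_nonneg (hMpd.posSemidef.conjTranspose_mul_mul_same _))).1
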